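/- arXiv:1006.3502 — 2 statements merged into one kernel-verified Lean document; each statement's English description precedes it below -/
import Mathlib

section
/- If ρ is a separable mixed state on C^d ⊗ C^d, then its fully entangled fraction satisfies F(ρ) ≤ 1/d. -/
/-! Write `ψ_U = (U ⊗ I) ψ⁺`. For a product vector, `⟨ψ_U, a ⊗ b⟩ = d^{-1/2} ∑ₖ (Uᴴ a)ₖ bₖ`, so
Cauchy–Schwarz together with `‖Uᴴ a‖ = ‖a‖` bounds its squared modulus by `1/d`. The expectation of
a separable `ρ` in `ψ_U` is a convex combination of such squared moduli. -/

open Matrix Complex BigOperators Finset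

noncomputable section

/-- The maximally entangled state `|ψ⁺⟩ = (1/√d) ∑ₖ |kk⟩` on `ℂ^d ⊗ ℂ^d`. -/
def psiPlus (d : ℕ) : (Fin d × Fin d) → ℂ :=
  fun p => if p.1 = p.2 then ((1 / Real.sqrt d : ℝ) : ℂ) else 0

/-- `U ⊗ I` acting on `ℂ^d ⊗ ℂ^d`. -/
def tensorI {d : ℕ} (U : Matrix (Fin d) (Fin d) ℂ) :
    Matrix (Fin d × Fin d) (Fin d × Fin d) ℂ :=
  fun p q => U p.1 q.1 * (if p.2 = q.2 then 1 else 0)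

/-- The rank-one projector `|ψ⟩⟨ψ|`. -/
def outer {n : Type*} [Fintype n] (ψ : n → ℂ) : Matrix n n ℂ :=
  Matrix.vecMulVec ψ (star ψ)

/-- The fully entangled fraction
`F(ρ) = max_U ⟨ψ⁺| (U† ⊗ I) ρ (U ⊗ I) |ψ⁺⟩`. -/
def fef (d : ℕ) (ρ : Matrix (Fin d × Fin d) (Fin d × Fin d) ℂ) : ℝ :=
  sSup { x : ℝ | ∃ U ∈ Matrix.unitaryGroup (Fin d) ℂ,
    x = (star (tensorI U *ᵥ psiPlus d) ⬝ᵥ (ρ *ᵥ (tensorI U *ᵥ psiPlus d))).re }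

lemma tensorI_mulVec_psiPlus {d : ℕ} (U : Matrix (Fin d) (Fin d) ℂ) (q : Fin d × Fin d) :
    (tensorI U *ᵥ psiPlus d) q = ((1 / Real.sqrt d : ℝ) : ℂ) * U q.1 q.2 := by
  simp [tensorI, psiPlus, mulVec, dotProduct, Fintype.sum_prod_type, mul_comm]

lemma star_tensorI_mulVec_psiPlus_dotProduct {d : ℕ} (U : Matrix (Fin d) (Fin d) ℂ)
    (a b : Fin d → ℂ) :
    star (tensorI U *ᵥ psiPlus d) ⬝ᵥ (fun q : Fin d × Fin d => a q.1 * b q.2) =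
      ((1 / Real.sqrt d : ℝ) : ℂ) * ((Uᴴ *ᵥ a) ⬝ᵥ b) := by
  simp only [dotProduct, Pi.star_apply, tensorI_mulVec_psiPlus]
  simp only [mulVec, dotProduct, star_mul', Complex.star_def, Complex.conj_ofReal,
    conjTranspose_apply, Fintype.sum_prod_type, Finset.mul_sum, Finset.sum_mul]
  rw [Finset.sum_comm]
  exact Finset.sum_congr rfl fun k _ => Finset.sum_congr rfl fun j _ => by ring

lemma re_star_dotProduct_self {n : Type*} [Fintype n] (v : n → ℂ) :
    (star v ⬝ᵥ v).re = ∑ k, ‖v k‖ ^ 2 := by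
  simp [dotProduct, Complex.re_sum, Complex.mul_re, Complex.sq_norm, Complex.normSq_apply]

lemma sum_norm_sq_conjTranspose_mulVec {n : Type*} [Fintype n] [DecidableEq n]
    {U : Matrix n n ℂ} (hU : U ∈ unitaryGroup n ℂ) (a : n → ℂ) :
    ∑ k, ‖(Uᴴ *ᵥ a) k‖ ^ 2 = ∑ k, ‖a k‖ ^ 2 := by
  have hUUh : U * Uᴴ = 1 := by
    simpa [Matrix.star_eq_conjTranspose] using Matrix.mem_unitaryGroup_iff.mp hU
  rw [← re_star_dotProduct_self, ← re_star_dotProduct_self, star_mulVec,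
    conjTranspose_conjTranspose, dotProduct_mulVec, vecMul_vecMul, hUUh, vecMul_one]

lemma norm_dotProduct_sq_le {n : Type*} [Fintype n] (u v : n → ℂ) :
    ‖u ⬝ᵥ v‖ ^ 2 ≤ (∑ k, ‖u k‖ ^ 2) * ∑ k, ‖v k‖ ^ 2 := by
  have htri : ‖u ⬝ᵥ v‖ ≤ ∑ k, ‖u k‖ * ‖v k‖ := by
    simpa only [dotProduct, norm_mul] using norm_sum_le Finset.univ fun k => u k * v k
  calc ‖u ⬝ᵥ v‖ ^ 2 ≤ (∑ k, ‖u k‖ * ‖v k‖) ^ 2 := by gcongr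
    _ ≤ (∑ k, ‖u k‖ ^ 2) * ∑ k, ‖v k‖ ^ 2 := Finset.sum_mul_sq_le_sq_mul_sq _ _ _

lemma re_dotProduct_outer_mulVec {n : Type*} [Fintype n] (v ψ : n → ℂ) :
    (star ψ ⬝ᵥ (outer v *ᵥ ψ)).re = ‖star ψ ⬝ᵥ v‖ ^ 2 := by
  have hfactor : star ψ ⬝ᵥ (outer v *ᵥ ψ) = (star ψ ⬝ᵥ v) * star (star ψ ⬝ᵥ v) := by
    rw [outer, vecMulVec_mulVec, op_smul_eq_smul, dotProduct_smul, smul_eq_mul,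
      star_dotProduct, mul_comm]
  rw [hfactor, Complex.star_def, Complex.mul_conj', ← Complex.ofReal_pow, Complex.ofReal_re]

lemma re_dotProduct_sum_smul_mulVec_le {m ι : Type*} [Fintype m] [Fintype ι] (ψ : m → ℂ)
    (p : ι → ℝ) (M : ι → Matrix m m ℂ) (c : ℝ) (hp : ∀ i, 0 ≤ p i) (hpsum : ∑ i, p i = 1)
    (hM : ∀ i, (star ψ ⬝ᵥ (M i *ᵥ ψ)).re ≤ c) :
    (star ψ ⬝ᵥ ((∑ i, p i • M i) *ᵥ ψ)).re ≤ c :=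
  calc (star ψ ⬝ᵥ ((∑ i, p i • M i) *ᵥ ψ)).re = ∑ i, p i * (star ψ ⬝ᵥ (M i *ᵥ ψ)).re := by
        simp only [sum_mulVec, dotProduct_sum, smul_mulVec, dotProduct_smul, Complex.re_sum,
          Complex.smul_re, smul_eq_mul]
    _ ≤ ∑ i, p i * c := Finset.sum_le_sum fun i _ => mul_le_mul_of_nonneg_left (hM i) (hp i)
    _ = c := by rw [← Finset.sum_mul, hpsum, one_mul]

lemma norm_star_tensorI_mulVec_psiPlus_dotProduct_sq_le {d : ℕ} {U : Matrix (Fin d) (Fin d) ℂ}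
    (hU : U ∈ unitaryGroup (Fin d) ℂ) {a b : Fin d → ℂ} (ha : ∑ k, ‖a k‖ ^ 2 = 1)
    (hb : ∑ k, ‖b k‖ ^ 2 = 1) :
    ‖star (tensorI U *ᵥ psiPlus d) ⬝ᵥ (fun q : Fin d × Fin d => a q.1 * b q.2)‖ ^ 2
      ≤ 1 / d := by
  have hscale : ‖((1 / Real.sqrt d : ℝ) : ℂ)‖ ^ 2 = 1 / d := by
    rw [Complex.norm_real, Real.norm_eq_abs, sq_abs, div_pow, one_pow,
      Real.sq_sqrt (Nat.cast_nonneg d)]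
  have hCS := norm_dotProduct_sq_le (Uᴴ *ᵥ a) b
  rw [sum_norm_sq_conjTranspose_mulVec hU, ha, hb, one_mul] at hCS
  rw [star_tensorI_mulVec_psiPlus_dotProduct, norm_mul, mul_pow, hscale]
  exact mul_le_of_le_one_right (by positivity) hCS

theorem fef_separable_le_general (d : ℕ)
    (ρ : Matrix (Fin d × Fin d) (Fin d × Fin d) ℂ)
    (hsep : ∃ (n : ℕ) (p : Fin n → ℝ) (a b : Fin n → (Fin d → ℂ)),
      (∀ i, 0 ≤ p i) ∧ (∑ i, p i = 1) ∧
      (∀ i, ∑ k, ‖a i k‖ ^ 2 = 1) ∧ (∀ i, ∑ k, ‖b i k‖ ^ 2 = 1) ∧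
      ρ = ∑ i, p i • outer (fun q : Fin d × Fin d => a i q.1 * b i q.2)) :
    fef d ρ ≤ 1 / d := by
  obtain ⟨n, p, a, b, hp, hpsum, ha, hb, rfl⟩ := hsep
  refine Real.sSup_le ?_ (by positivity)
  rintro x ⟨U, hU, rfl⟩
  refine re_dotProduct_sum_smul_mulVec_le _ p _ _ hp hpsum fun i => ?_
  rw [re_dotProduct_outer_mulVec]
  exact norm_star_tensorI_mulVec_psiPlus_dotProduct_sq_le hU (ha i) (hb i)

/-- A separable state has FEF at most `1/d`. -/
theorem fef_separable_le (d : ℕ) (hd : 0 < d)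
    (ρ : Matrix (Fin d × Fin d) (Fin d × Fin d) ℂ)
    (hsep : ∃ (n : ℕ) (p : Fin n → ℝ) (a b : Fin n → (Fin d → ℂ)),
      (∀ i, 0 ≤ p i) ∧ (∑ i, p i = 1) ∧
      (∀ i, ∑ k, ‖a i k‖ ^ 2 = 1) ∧ (∀ i, ∑ k, ‖b i k‖ ^ 2 = 1) ∧
      ρ = ∑ i, p i • outer (fun q : Fin d × Fin d => a i q.1 * b i q.2)) :
    fef d ρ ≤ 1 / d :=
  fef_separable_le_general d ρ hsep
end
end

section
/- For a normalized superposition |ψ⟩ = (1/γ)(α₁|φ₁⟩ + ... + α_m|φ_m⟩) of pure states in C^d ⊗ C^d, the FEF satisfies max_i { |α_i|F^{1/2}(|φ_i⟩) − Σ_{j≠i}|α_j|F^{1/2}(|φ_j⟩) } ≤ |γ|F^{1/2}(|ψ⟩) ≤ Σ_i |α_i|F^{1/2}(|φ_i⟩). -/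
open Matrix Complex BigOperators Finset

noncomputable section

/-!
`√F(|χ⟩⟨χ|) = sup_U |⟨ψ⁺|(U† ⊗ I)|χ⟩|` is a supremum of moduli of linear functionals of `χ`,
hence a seminorm on `ℂ^d ⊗ ℂ^d`. Both bounds are then the triangle inequality for this seminorm,
applied to `γψ = ∑ᵢ αᵢφᵢ` and to `αᵢφᵢ = γψ - ∑_{j≠i} αⱼφⱼ`, with `|αᵢ|` pulled out by homogeneity.
-/

lemma Real.sqrt_iSup_sq {ι : Sort*} [Nonempty ι] {f : ι → ℝ} (hf : ∀ i, 0 ≤ f i)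
    (hb : BddAbove (Set.range f)) : √(⨆ i, f i ^ 2) = ⨆ i, f i := by
  obtain ⟨c, hc⟩ := hb
  have hb2 : BddAbove (Set.range fun i => f i ^ 2) :=
    ⟨c ^ 2, Set.forall_mem_range.2 fun i => pow_le_pow_left₀ (hf i) (hc ⟨i, rfl⟩) 2⟩
  rw [Real.sqrt_monotone.map_ciSup_of_continuousAt Real.continuous_sqrt.continuousAt hb2]
  simp only [Real.sqrt_sq (hf _)]

lemma re_star_dotProduct_outer_mulVec {n : Type*} [Fintype n] (φ w : n → ℂ) :
    (star w ⬝ᵥ (outer φ *ᵥ w)).re = ‖star w ⬝ᵥ φ‖ ^ 2 := by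
  rw [outer, vecMulVec_mulVec, star_dotProduct φ w, op_smul_eq_smul, dotProduct_smul,
    smul_eq_mul, Complex.star_def, Complex.conj_mul', ← Complex.ofReal_pow, Complex.ofReal_re]

/-- The overlap `⟨ψ⁺|(U† ⊗ I)|χ⟩`. -/
def fefAmplitude {d : ℕ} (U : Matrix (Fin d) (Fin d) ℂ) : (Fin d × Fin d → ℂ) →ₗ[ℂ] ℂ where
  toFun χ := star (tensorI U *ᵥ psiPlus d) ⬝ᵥ χ
  map_add' := dotProduct_add _
  map_smul' c χ := dotProduct_smul c _ χ

lemma tensorI_mulVec_psiPlus_apply {d : ℕ} (U : Matrix (Fin d) (Fin d) ℂ) (p : Fin d × Fin d) :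
    (tensorI U *ᵥ psiPlus d) p = U p.1 p.2 * ((1 / √d : ℝ) : ℂ) := by
  simp [tensorI, psiPlus, mulVec, dotProduct, Fintype.sum_prod_type, mul_ite]

lemma norm_tensorI_mulVec_psiPlus_apply_le_one {d : ℕ} {U : Matrix (Fin d) (Fin d) ℂ}
    (hU : U ∈ unitaryGroup (Fin d) ℂ) (p : Fin d × Fin d) :
    ‖(tensorI U *ᵥ psiPlus d) p‖ ≤ 1 := by
  have hscale : |1 / √(d : ℝ)| ≤ 1 := by
    rw [abs_of_nonneg (by positivity)]
    rcases Nat.eq_zero_or_pos d with rfl | hd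
    · simp
    · exact div_le_one_of_le₀ (Real.one_le_sqrt.2 (by exact_mod_cast hd)) (by positivity)
  rw [tensorI_mulVec_psiPlus_apply, norm_mul, Complex.norm_real, Real.norm_eq_abs]
  exact mul_le_one₀ (entry_norm_bound_of_unitary hU _ _) (abs_nonneg _) hscale

lemma norm_fefAmplitude_le {d : ℕ} {U : Matrix (Fin d) (Fin d) ℂ}
    (hU : U ∈ unitaryGroup (Fin d) ℂ) (χ : Fin d × Fin d → ℂ) :
    ‖fefAmplitude U χ‖ ≤ ∑ p, ‖χ p‖ := by
  calc ‖fefAmplitude U χ‖ ≤ ∑ p, ‖star (tensorI U *ᵥ psiPlus d) p * χ p‖ := norm_sum_le _ _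
    _ ≤ ∑ p, ‖χ p‖ := by
      gcongr with p
      rw [norm_mul, Pi.star_apply, norm_star]
      exact mul_le_of_le_one_left (norm_nonneg _) (norm_tensorI_mulVec_psiPlus_apply_le_one hU p)

lemma bddAbove_range_norm_fefAmplitude {d : ℕ} (χ : Fin d × Fin d → ℂ) :
    BddAbove (Set.range fun U : unitaryGroup (Fin d) ℂ => ‖fefAmplitude (U : Matrix _ _ ℂ) χ‖) :=
  ⟨∑ p, ‖χ p‖, Set.forall_mem_range.2 fun U => norm_fefAmplitude_le U.2 χ⟩

lemma fef_outer_eq_iSup {d : ℕ} (χ : Fin d × Fin d → ℂ) :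
    fef d (outer χ) = ⨆ U : unitaryGroup (Fin d) ℂ, ‖fefAmplitude (U : Matrix _ _ ℂ) χ‖ ^ 2 := by
  rw [fef, iSup]
  congr 1
  ext x
  simp only [re_star_dotProduct_outer_mulVec, Set.mem_ofPred_eq, Set.mem_range, Subtype.exists,
    exists_prop, fefAmplitude, LinearMap.coe_mk, AddHom.coe_mk, eq_comm]

def fefSeminorm (d : ℕ) : Seminorm ℂ (Fin d × Fin d → ℂ) :=
  ⨆ U : unitaryGroup (Fin d) ℂ, (normSeminorm ℂ ℂ).comp (fefAmplitude (U : Matrix _ _ ℂ))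

lemma sqrt_fef_outer {d : ℕ} (χ : Fin d × Fin d → ℂ) :
    √(fef d (outer χ)) = fefSeminorm d χ := by
  rw [fefSeminorm, Seminorm.coe_iSup_eq (Seminorm.bddAbove_range_iff.2
    bddAbove_range_norm_fefAmplitude), iSup_apply, fef_outer_eq_iSup,
    Real.sqrt_iSup_sq (fun _ => norm_nonneg _) (bddAbove_range_norm_fefAmplitude χ)]
  rfl

theorem fef_superposition_many_general (d : ℕ) (m : ℕ)
    (φ : Fin m → (Fin d × Fin d → ℂ)) (α : Fin m → ℂ) (γ : ℂ)
    (ψ : Fin d × Fin d → ℂ)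
    (hsum : γ • ψ = ∑ i, α i • φ i) :
    (∀ i, ‖α i‖ * Real.sqrt (fef d (outer (φ i))) -
        ∑ j ∈ Finset.univ \ {i}, ‖α j‖ * Real.sqrt (fef d (outer (φ j))) ≤
      ‖γ‖ * Real.sqrt (fef d (outer ψ))) ∧
    ‖γ‖ * Real.sqrt (fef d (outer ψ)) ≤
      ∑ i, ‖α i‖ * Real.sqrt (fef d (outer (φ i))) := by
  have hsubadd := Finset.le_sum_of_subadditive (ι := Fin m) (fefSeminorm d) (map_zero _).le
    (map_add_le_add _)
  simp only [sqrt_fef_outer, ← map_smul_eq_mul]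
  refine ⟨fun i => ?_, hsum ▸ hsubadd _ _⟩
  have hsplit : α i • φ i = γ • ψ - ∑ j ∈ univ \ {i}, α j • φ j := by
    rw [hsum, ← Finset.sum_sdiff (subset_univ {i}), sum_singleton, add_sub_cancel_left]
  rw [sub_le_iff_le_add, hsplit]
  exact (map_sub_le_add _ _ _).trans (add_le_add le_rfl (hsubadd _ _))

/-- FEF of a superposition of `m` pure states:
`maxᵢ{|αᵢ|√F(φᵢ) − ∑_{j≠i}|αⱼ|√F(φⱼ)} ≤ |γ|√F(ψ) ≤ ∑ᵢ|αᵢ|√F(φᵢ)`. -/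
theorem fef_superposition_many (d : ℕ) (hd : 0 < d) (m : ℕ)
    (φ : Fin m → (Fin d × Fin d → ℂ)) (α : Fin m → ℂ) (γ : ℂ)
    (ψ : Fin d × Fin d → ℂ)
    (hφ : ∀ i, ∑ q, ‖φ i q‖ ^ 2 = 1) (hψn : ∑ q, ‖ψ q‖ ^ 2 = 1)
    (hsum : γ • ψ = ∑ i, α i • φ i) :
    (∀ i, ‖α i‖ * Real.sqrt (fef d (outer (φ i))) -
        ∑ j ∈ Finset.univ \ {i}, ‖α j‖ * Real.sqrt (fef d (outer (φ j))) ≤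
      ‖γ‖ * Real.sqrt (fef d (outer ψ))) ∧
    ‖γ‖ * Real.sqrt (fef d (outer ψ)) ≤
      ∑ i, ‖α i‖ * Real.sqrt (fef d (outer (φ i))) :=
  fef_superposition_many_general d m φ α γ ψ hsum
end
end
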